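/- arXiv:1108.4558 — 2 statements merged into one kernel-verified Lean document; each statement's English description precedes it below -/
import Mathlib

section
/- Let α ∈ (1/2, 1), a, b, γ : [0,∞) → ℝ bounded with a(0) > 0, γ continuous with γ(z)^2 > 0 for z > 0, a Lipschitz, and suppose z ↦ 1/(γ(z)^2 z^{2α−1}) is integrable at 0^+. Define the scale function p_1(x) = ∫_1^x exp( −2 ∫_1^y (a(z) − b(z)z)/(γ(z)^2 z^{2α}) dz ) dy for x > 0. Then lim_{x→0^+} p_1(x) = −∞. -/
open MeasureTheory Set Filter

/-- Feller test at the origin, case `α ∈ (1/2,1)`: under the stated conditions on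
`a, b, γ` (boundedness, `a(0) > 0`, `a` Lipschitz, nondegeneracy of `γ` away from `0`
and integrability of `1/(γ(z)² z^{2α-1})` at `0⁺`), the scale function
`p₁(x) = ∫_1^x exp(-2 ∫_1^y (a(z) - b(z)z)/(γ(z)² z^{2α}) dz) dy`
tends to `-∞` as `x → 0⁺`. -/
theorem stmt_11 (α : ℝ) (hα : α ∈ Set.Ioo (1/2 : ℝ) 1)
    (a b γ : ℝ → ℝ)
    (haLip : ∃ K : NNReal, LipschitzOnWith K a (Set.Ici 0))
    (hbc : ContinuousOn b (Set.Ici 0))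
    (hγc : ContinuousOn γ (Set.Ici 0))
    (hbdd : ∃ Cb : ℝ, ∀ x ≥ (0:ℝ), |a x| ≤ Cb ∧ |b x| ≤ Cb ∧ |γ x| ≤ Cb)
    (ha0 : 0 < a 0)
    (hγpos : ∀ z > (0:ℝ), 0 < γ z ^ 2)
    (hint : IntegrableOn (fun z => 1 / (γ z ^ 2 * z ^ (2 * α - 1))) (Set.Ioo 0 1))
    (p1 : ℝ → ℝ)
    (hp1 : ∀ x > (0:ℝ), p1 x =
      ∫ y in (1:ℝ)..x,
        Real.exp (-2 * ∫ z in (1:ℝ)..y, (a z - b z * z) / (γ z ^ 2 * z ^ (2 * α)))) :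
    Tendsto p1 (nhdsWithin 0 (Set.Ioi 0)) atBot := by
  obtain ⟨K, hK⟩ := haLip
  obtain ⟨Cb, hCb⟩ := hbdd
  obtain ⟨hα1, hα2⟩ := hα
  have hCb0 : 0 < Cb := lt_of_lt_of_le ha0 ((le_abs_self _).trans (hCb 0 le_rfl).1)
  set c : ℝ := a 0 / 2 with hc
  have hcpos : 0 < c := by positivity
  have hKCb : 0 < (K:ℝ) + Cb + 1 := by positivity
  set z₀ : ℝ := min 1 (a 0 / (2 * ((K:ℝ) + Cb + 1))) with hz₀def
  have hz₀pos : 0 < z₀ := lt_min one_pos (by positivity)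
  have hz₀le1 : z₀ ≤ 1 := min_le_left _ _
  set f : ℝ → ℝ := fun z => (a z - b z * z) / (γ z ^ 2 * z ^ (2*α)) with hfdef
  -- numerator lower bound near 0
  have hnum : ∀ z ∈ Set.Ioc (0:ℝ) z₀, c ≤ a z - b z * z := by
    intro z hz
    have hz0 : 0 ≤ z := hz.1.le
    have h1 : |a z - a 0| ≤ (K:ℝ) * z := by
      have := hK.dist_le_mul z (mem_Ici.2 hz0) 0 (mem_Ici.2 le_rfl)
      simpa [Real.dist_eq, abs_of_nonneg hz0] using this
    have h2 : |b z * z| ≤ Cb * z := by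
      rw [abs_mul, abs_of_nonneg hz0]
      exact mul_le_mul_of_nonneg_right (hCb z hz0).2.1 hz0
    have h3 : z ≤ a 0 / (2 * ((K:ℝ) + Cb + 1)) := hz.2.trans (min_le_right _ _)
    have h4 : ((K:ℝ) + Cb + 1) * z ≤ a 0 / 2 := by
      have e : ((K:ℝ)+Cb+1) * (a 0 / (2*((K:ℝ)+Cb+1))) = a 0/2 := by
        field_simp
      nlinarith [mul_le_mul_of_nonneg_left h3 hKCb.le]
    have h5 := abs_le.1 h1
    have h6 := abs_le.1 h2
    linarith
  -- continuity and integrability of f on sets away from 0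
  have hacont : ContinuousOn a (Set.Ici 0) := hK.continuousOn
  have hfcont : ∀ s : Set ℝ, s ⊆ Set.Ioi 0 → ContinuousOn f s := by
    intro s hs
    have hs' : s ⊆ Set.Ici 0 := hs.trans Ioi_subset_Ici_self
    apply ContinuousOn.div
    · exact (hacont.mono hs').sub ((hbc.mono hs').mul continuousOn_id)
    · refine ((hγc.mono hs').pow 2).mul ?_
      intro z hz
      exact (Real.continuousAt_rpow_const z _ (Or.inl (ne_of_gt (hs hz)))).continuousWithinAt
    · intro z hz
      exact ne_of_gt (mul_pos (hγpos z (hs hz)) (Real.rpow_pos_of_pos (hs hz) _))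
  have huIccpos : ∀ u v : ℝ, 0 < u → 0 < v → Set.uIcc u v ⊆ Set.Ioi 0 := by
    intro u v hu hv x hx
    exact lt_of_lt_of_le (lt_min hu hv) hx.1
  have hfint : ∀ u v : ℝ, 0 < u → 0 < v → IntervalIntegrable f volume u v := by
    intro u v hu hv
    exact (hfcont _ (huIccpos u v hu hv)).intervalIntegrable
  -- the primitive F and integrand g
  set F : ℝ → ℝ := fun y => ∫ z in (1:ℝ)..y, f z with hFdef
  set g : ℝ → ℝ := fun y => Real.exp (-2 * F y) with hgdef
  have hgpos : ∀ y, 0 < g y := fun y => Real.exp_pos _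
  -- continuity of g on uIcc x 1 for x > 0
  have hgcont : ∀ x : ℝ, 0 < x → ContinuousOn g (Set.uIcc x 1) := by
    intro x hx
    have hFc : ContinuousOn F (Set.uIcc x 1) :=
      intervalIntegral.continuousOn_primitive_interval' (hfint x 1 hx one_pos)
        right_mem_uIcc
    exact Real.continuous_exp.comp_continuousOn (continuousOn_const.mul hFc)
  -- constants
  set s : ℝ := 2*α - 1 with hsdef
  have hspos : 0 < s := by rw [hsdef]; linarith
  have hslt1 : s < 1 := by rw [hsdef]; linarith
  have hsexp : -(2*α)+1 = -s := by rw [hsdef]; ring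
  set κ : ℝ := 2 * c / (Cb^2 * s) with hκdef
  have hκpos : 0 < κ := by positivity
  set D : ℝ := ∫ z in z₀..(1:ℝ), f z with hDdef
  set C₀ : ℝ := -κ * z₀ ^ (-s) + 2 * D with hC₀def
  -- key exponent lower bound
  have hFlow : ∀ y ∈ Set.Ioc (0:ℝ) z₀, κ * y ^ (-s) + C₀ ≤ -2 * F y := by
    intro y hy
    have hy0 : 0 < y := hy.1
    have hyz : y ≤ z₀ := hy.2
    have hsplit : (∫ z in y..z₀, f z) + ∫ z in z₀..(1:ℝ), f z = ∫ z in y..(1:ℝ), f z :=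
      intervalIntegral.integral_add_adjacent_intervals (hfint y z₀ hy0 hz₀pos)
        (hfint z₀ 1 hz₀pos one_pos)
    have hsymm : F y = -∫ z in y..(1:ℝ), f z := intervalIntegral.integral_symm y 1
    have hmono : (∫ z in y..z₀, (c / Cb^2) * z ^ (-(2*α))) ≤ ∫ z in y..z₀, f z := by
      apply intervalIntegral.integral_mono_on hyz
      · apply ContinuousOn.intervalIntegrable
        refine continuousOn_const.mul ?_
        intro z hz
        have hz0 : (0:ℝ) < z := huIccpos y z₀ hy0 hz₀pos hz
        exact (Real.continuousAt_rpow_const z _ (Or.inl (ne_of_gt hz0))).continuousWithinAt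
      · exact hfint y z₀ hy0 hz₀pos
      · intro z hz
        have hz0 : 0 < z := lt_of_lt_of_le hy0 hz.1
        have hnum' : c ≤ a z - b z * z := hnum z ⟨hz0, hz.2⟩
        have hrp : (0:ℝ) < z ^ (2*α) := Real.rpow_pos_of_pos hz0 _
        have hγle : γ z ^ 2 ≤ Cb^2 := by
          have h := (hCb z hz0.le).2.2
          calc γ z ^ 2 = |γ z|^2 := (sq_abs _).symm
            _ ≤ Cb^2 := pow_le_pow_left₀ (abs_nonneg _) h 2
        have hden : γ z ^ 2 * z ^ (2*α) ≤ Cb^2 * z ^ (2*α) :=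
          mul_le_mul_of_nonneg_right hγle hrp.le
        have hdenpos : 0 < γ z ^ 2 * z ^ (2*α) := mul_pos (hγpos z hz0) hrp
        have h1 : c / (Cb^2 * z ^ (2*α)) ≤ f z :=
          div_le_div₀ (hcpos.le.trans hnum') hnum' hdenpos hden
        calc (c / Cb^2) * z ^ (-(2*α)) = c / (Cb^2 * z ^ (2*α)) := by
              rw [Real.rpow_neg hz0.le]
              field_simp
          _ ≤ f z := h1
    have hcomp : (∫ z in y..z₀, (c / Cb^2) * z ^ (-(2*α)))
        = (c / Cb^2) * ((z₀ ^ (-(2*α)+1) - y ^ (-(2*α)+1)) / (-(2*α)+1)) := by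
      rw [_root_.intervalIntegral.integral_const_mul, integral_rpow]
      right
      refine ⟨?_, ?_⟩
      · intro h
        have h' : -(2*α) = -1 := h
        linarith
      · intro h
        exact lt_irrefl (0:ℝ) (huIccpos y z₀ hy0 hz₀pos h)
    have hexp1 : y ^ (-(2*α)+1) = y ^ (-s) := by rw [hsexp]
    have hexp2 : z₀ ^ (-(2*α)+1) = z₀ ^ (-s) := by rw [hsexp]
    have hkey : κ * y ^ (-s) - κ * z₀ ^ (-s) ≤ 2 * ∫ z in y..z₀, f z := by
      have hm := hmono
      rw [hcomp, hexp1, hexp2, hsexp] at hm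
      have heq : (c / Cb^2) * ((z₀ ^ (-s) - y ^ (-s)) / (-s))
          = (κ/2) * y ^ (-s) - (κ/2) * z₀ ^ (-s) := by
        rw [hκdef]
        field_simp
        ring
      rw [heq] at hm
      linarith
    have hFeq : -2 * F y = 2 * ((∫ z in y..z₀, f z) + D) := by
      rw [hsymm, ← hsplit, ← hDdef]; ring
    rw [hFeq, hC₀def]
    linarith
  -- choose n with n * s ≥ 1
  set n : ℕ := ⌈s⁻¹⌉₊ with hndef
  have hn1 : 0 < n := Nat.ceil_pos.2 (by positivity)
  have hnpos : (0:ℝ) < n := by exact_mod_cast hn1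
  have hns : 1 ≤ s * n := by
    have h1 : s⁻¹ ≤ (n:ℝ) := Nat.le_ceil _
    calc (1:ℝ) = s * s⁻¹ := by field_simp
      _ ≤ s * n := mul_le_mul_of_nonneg_left h1 hspos.le
  set A : ℝ := Real.exp C₀ * (κ/n)^n with hAdef
  have hApos : 0 < A := by positivity
  -- pointwise lower bound g y ≥ A / y
  have hglow : ∀ y ∈ Set.Ioc (0:ℝ) z₀, A * y⁻¹ ≤ g y := by
    intro y hy
    have hy0 : 0 < y := hy.1
    have hy1 : y ≤ 1 := hy.2.trans hz₀le1
    set t : ℝ := κ * y ^ (-s) with htdef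
    have ht0 : 0 ≤ t := by positivity
    have h1 : Real.exp (t + C₀) ≤ g y := Real.exp_le_exp.2 (hFlow y hy)
    have h2 : (t/n)^n ≤ Real.exp t := by
      have hE : Real.exp t = Real.exp (t/n) ^ n := by
        rw [← Real.exp_nat_mul]
        congr 1
        field_simp
      rw [hE]
      refine pow_le_pow_left₀ (div_nonneg ht0 hnpos.le) ?_ n
      have := Real.add_one_le_exp (t/n)
      linarith
    have h3 : (t/n)^n = (κ/n)^n * y ^ (-s*(n:ℝ)) := by
      have hq : t/n = (κ/n) * y ^ (-s) := by rw [htdef]; ring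
      rw [hq, mul_pow]
      congr 1
      rw [← Real.rpow_natCast (y ^ (-s)) n, ← Real.rpow_mul hy0.le]
    have h4 : y ^ (-(1:ℝ)) ≤ y ^ (-s*(n:ℝ)) := by
      apply Real.rpow_le_rpow_of_exponent_ge hy0 hy1
      linarith
    have h5 : y ^ (-(1:ℝ)) = y⁻¹ := Real.rpow_neg_one y
    calc A * y⁻¹ = Real.exp C₀ * ((κ/n)^n * y ^ (-(1:ℝ))) := by rw [hAdef, h5]; ring
      _ ≤ Real.exp C₀ * ((κ/n)^n * y ^ (-s*(n:ℝ))) := by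
          refine mul_le_mul_of_nonneg_left ?_ (Real.exp_pos _).le
          exact mul_le_mul_of_nonneg_left h4 (by positivity)
      _ = Real.exp C₀ * (t/n)^n := by rw [h3]
      _ ≤ Real.exp C₀ * Real.exp t := mul_le_mul_of_nonneg_left h2 (Real.exp_pos _).le
      _ = Real.exp (t + C₀) := by rw [← Real.exp_add, add_comm]
      _ ≤ g y := h1
  -- main estimate
  have hmain : ∀ x ∈ Set.Ioo (0:ℝ) z₀, p1 x ≤ A * Real.log x - A * Real.log z₀ := by
    intro x hx
    have hx0 : 0 < x := hx.1
    have hxz : x ≤ z₀ := hx.2.le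
    have hgc1 : ContinuousOn g (Set.uIcc x 1) := hgcont x hx0
    have hsub1 : Set.uIcc x z₀ ⊆ Set.uIcc x 1 :=
      Set.uIcc_subset_uIcc left_mem_uIcc
        (by rw [Set.uIcc_of_le (hxz.trans hz₀le1)]
            exact ⟨hxz, hz₀le1⟩)
    have hsub2 : Set.uIcc z₀ 1 ⊆ Set.uIcc x 1 :=
      Set.uIcc_subset_uIcc
        (by rw [Set.uIcc_of_le (hxz.trans hz₀le1)]
            exact ⟨hxz, hz₀le1⟩)
        right_mem_uIcc
    have hgint1 : IntervalIntegrable g volume x z₀ :=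
      (hgc1.mono hsub1).intervalIntegrable
    have hgint2 : IntervalIntegrable g volume z₀ 1 :=
      (hgc1.mono hsub2).intervalIntegrable
    have hgsplit : (∫ y in x..z₀, g y) + ∫ y in z₀..(1:ℝ), g y = ∫ y in x..(1:ℝ), g y :=
      intervalIntegral.integral_add_adjacent_intervals hgint1 hgint2
    have hp1x : p1 x = -∫ y in x..(1:ℝ), g y := by
      have h := hp1 x hx0
      rw [intervalIntegral.integral_symm] at h
      exact h
    have hnn : 0 ≤ ∫ y in z₀..(1:ℝ), g y :=
      intervalIntegral.integral_nonneg hz₀le1 (fun u _ => (hgpos u).le)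
    have hintinv : IntervalIntegrable (fun y : ℝ => A * y⁻¹) volume x z₀ := by
      apply IntervalIntegrable.const_mul
      apply intervalIntegral.intervalIntegrable_inv
      · intro u hu
        exact ne_of_gt (huIccpos x z₀ hx0 hz₀pos hu)
      · exact continuousOn_id
    have hlb : A * (Real.log z₀ - Real.log x) ≤ ∫ y in x..z₀, g y := by
      have hm : (∫ y in x..z₀, A * y⁻¹) ≤ ∫ y in x..z₀, g y := by
        apply intervalIntegral.integral_mono_on hxz hintinv hgint1
        intro y hy
        exact hglow y ⟨lt_of_lt_of_le hx0 hy.1, hy.2⟩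
      have hcomp : (∫ y in x..z₀, A * y⁻¹) = A * (Real.log z₀ - Real.log x) := by
        rw [_root_.intervalIntegral.integral_const_mul, integral_inv_of_pos hx0 hz₀pos,
          Real.log_div (ne_of_gt hz₀pos) (ne_of_gt hx0)]
      linarith
    rw [hp1x, ← hgsplit]
    have := hlb
    nlinarith
  -- conclusion
  have hφ : Tendsto (fun x => A * Real.log x - A * Real.log z₀)
      (nhdsWithin 0 (Set.Ioi 0)) atBot := by
    have h1 : Tendsto (fun x => A * Real.log x) (nhdsWithin 0 (Set.Ioi 0)) atBot :=
      (tendsto_const_mul_atBot_of_pos hApos).2 Real.tendsto_log_nhdsGT_zero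
    simpa [sub_eq_add_neg] using tendsto_atBot_add_const_right _ (-(A * Real.log z₀)) h1
  apply tendsto_atBot_mono' _ _ hφ
  filter_upwards [Ioo_mem_nhdsGT_of_mem (Set.left_mem_Ico.2 hz₀pos)] with x hx
  exact hmain x hx
end

section
/- Let a, b, γ : [0,∞) → ℝ with b bounded, γ continuous with γ(z)^2 > 0 for z > 0, 1/γ^2 integrable at zero, and suppose there exists x̄ > 0 such that 2a(z)/γ(z)^2 ≥ 1 for all 0 < z < x̄. Define p_1(x) = ∫_1^x exp( −2 ∫_1^y (a(z) − b(z)z)/(γ(z)^2 z) dz ) dy for x > 0. Then lim_{x→0^+} p_1(x) = −∞. -/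
/-!
For `0 < z ≤ c`, where `c < min x̄ 1`, the Feller condition and the bound `b ≤ C` give
`(a z - z b z) / (γ z² z) ≥ 1 / (2z) - C / γ z²`. Since `1/γ²` is integrable at `0`, integrating
from `y` to `1` yields `∫_y^1 ≥ ½ log (c / y) - O(1)`, so the integrand of `p₁` is at least `D / y`
near `0`. As `1/y` is not integrable at `0`, `p₁ x ≤ -D log (c / x) → -∞`.
-/

open MeasureTheory Set Filter Topology

theorem ContinuousOn.intervalIntegrable_of_Ioi {f : ℝ → ℝ} {t u v : ℝ}
    (hf : ContinuousOn f (Ioi t)) (hu : t < u) (hv : t < v) :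
    IntervalIntegrable f volume u v :=
  (hf.mono (ordConnected_Ioi.uIcc_subset hu hv)).intervalIntegrable

theorem ContinuousOn.continuousOn_primitive_Ioi {f : ℝ → ℝ} {t a : ℝ}
    (hf : ContinuousOn f (Ioi t)) (ha : t < a) :
    ContinuousOn (fun y => ∫ z in a..y, f z) (Ioi t) := fun y hy =>
  (intervalIntegral.integral_hasDerivAt_right (hf.intervalIntegrable_of_Ioi ha hy)
    (hf.stronglyMeasurableAtFilter isOpen_Ioi y hy)
    (hf.continuousAt (Ioi_mem_nhds hy))).continuousAt.continuousWithinAt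

theorem continuousOn_const_div_Ioi (κ : ℝ) : ContinuousOn (fun z => κ / z) (Ioi 0) :=
  continuousOn_const.div (continuousOn_id' _) fun _ hz => ne_of_gt hz

theorem integral_const_div_of_pos {κ u v : ℝ} (hu : 0 < u) (hv : 0 < v) :
    ∫ z in u..v, κ / z = κ * Real.log (v / u) := by
  simp only [div_eq_mul_inv, intervalIntegral.integral_const_mul, integral_inv_of_pos hu hv]

theorem one_div_two_mul_sub_div_le {a b g z C : ℝ} (hz : 0 < z) (hg : 0 < g)
    (hb : b ≤ C) (ha : 1 ≤ 2 * a / g) :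
    1 / (2 * z) - C / g ≤ (a - b * z) / (g * z) := by
  have h2a : g ≤ 2 * a := by rwa [le_div_iff₀ hg, one_mul] at ha
  have hsplit : (a - b * z) / (g * z) = a / (g * z) - b / g := by field_simp
  have hfirst : 1 / (2 * z) ≤ a / (g * z) := by
    rw [div_le_div_iff₀ (by positivity) (by positivity)]
    nlinarith
  have hsecond : b / g ≤ C / g := by gcongr
  linarith

theorem exists_add_mul_log_le_integral {f g : ℝ → ℝ} {κ c : ℝ} (hf : ContinuousOn f (Ioi 0))
    (hg : IntegrableOn g (Ioo 0 1)) (hg0 : ∀ z ∈ Ioo (0 : ℝ) 1, 0 ≤ g z)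
    (hc0 : 0 < c) (hc1 : c < 1) (hfg : ∀ z ∈ Ioc 0 c, κ / z - g z ≤ f z) :
    ∃ K, ∀ y ∈ Ioc 0 c, κ * Real.log (c / y) + K ≤ ∫ z in y..1, f z := by
  refine ⟨(∫ z in c..1, f z) - ∫ z in Ioo 0 1, g z, fun y ⟨hy0, hyc⟩ => ?_⟩
  have hsub : Ioc y c ⊆ Ioo 0 1 := fun z hz => ⟨hy0.trans hz.1, hz.2.trans_lt hc1⟩
  have hinv := (continuousOn_const_div_Ioi κ).intervalIntegrable_of_Ioi hy0 hc0
  have hgi : IntervalIntegrable g volume y c :=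
    (intervalIntegrable_iff_integrableOn_Ioc_of_le hyc).2 (hg.mono_set hsub)
  have hgM : ∫ z in y..c, g z ≤ ∫ z in Ioo 0 1, g z := by
    rw [intervalIntegral.integral_of_le hyc]
    exact setIntegral_mono_set hg (ae_restrict_of_forall_mem measurableSet_Ioo hg0)
      hsub.eventuallyLE
  have hnear : κ * Real.log (c / y) - ∫ z in y..c, g z ≤ ∫ z in y..c, f z := by
    rw [← integral_const_div_of_pos hy0 hc0, ← intervalIntegral.integral_sub hinv hgi]
    exact intervalIntegral.integral_mono_on hyc (hinv.sub hgi)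
      (hf.intervalIntegrable_of_Ioi hy0 hc0) fun z hz => hfg z ⟨hy0.trans_le hz.1, hz.2⟩
  rw [← intervalIntegral.integral_add_adjacent_intervals (hf.intervalIntegrable_of_Ioi hy0 hc0)
    (hf.intervalIntegrable_of_Ioi hc0 one_pos)]
  linarith

theorem tendsto_integral_one_atBot_of_div_le {E : ℝ → ℝ} {c D : ℝ} (hc0 : 0 < c) (hc1 : c ≤ 1)
    (hD : 0 < D) (hE : ContinuousOn E (Ioi 0)) (hE0 : ∀ y ∈ Icc c 1, 0 ≤ E y)
    (hDE : ∀ y ∈ Ioc 0 c, D / y ≤ E y) :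
    Tendsto (fun x => ∫ y in 1..x, E y) (𝓝[>] 0) atBot := by
  have hbound : ∀ x ∈ Ioo 0 c, ∫ y in 1..x, E y ≤ -(D * Real.log (c / x)) := by
    intro x ⟨hx0, hxc⟩
    have hnear : D * Real.log (c / x) ≤ ∫ y in x..c, E y := by
      rw [← integral_const_div_of_pos hx0 hc0]
      exact intervalIntegral.integral_mono_on hxc.le
        ((continuousOn_const_div_Ioi D).intervalIntegrable_of_Ioi hx0 hc0)
        (hE.intervalIntegrable_of_Ioi hx0 hc0) fun y hy => hDE y ⟨hx0.trans_le hy.1, hy.2⟩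
    have hfar : 0 ≤ ∫ y in c..1, E y := intervalIntegral.integral_nonneg hc1 hE0
    rw [intervalIntegral.integral_symm, ← intervalIntegral.integral_add_adjacent_intervals
      (hE.intervalIntegrable_of_Ioi hx0 hc0) (hE.intervalIntegrable_of_Ioi hc0 one_pos)]
    linarith
  have hlog : Tendsto (fun x => D * Real.log (c / x)) (𝓝[>] 0) atTop := by
    refine (Real.tendsto_log_atTop.comp ?_).const_mul_atTop hD
    exact (tendsto_inv_nhdsGT_zero.const_mul_atTop hc0).congr fun x => (div_eq_mul_inv c x).symm
  refine tendsto_atBot_mono' _ ?_ (tendsto_neg_atTop_atBot.comp hlog)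
  filter_upwards [Ioo_mem_nhdsGT hc0] using hbound

/-- Feller test at the origin, square-root case `α = 1/2`: if `b` is bounded, `γ` is
continuous with `γ(z)² > 0` for `z > 0`, `1/γ²` is integrable at zero, and
`2a(z)/γ(z)² ≥ 1` for `z` near `0`, then the scale function
`p₁(x) = ∫_1^x exp(-2 ∫_1^y (a(z) - b(z)z)/(γ(z)² z) dz) dy` tends to `-∞`
as `x → 0⁺`. -/
theorem stmt_12 (a b γ : ℝ → ℝ)
    (hac : ContinuousOn a (Set.Ici 0))
    (hbc : ContinuousOn b (Set.Ici 0))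
    (hbdd : ∃ Cb : ℝ, ∀ x ≥ (0:ℝ), |b x| ≤ Cb)
    (hγc : ContinuousOn γ (Set.Ici 0))
    (hγpos : ∀ z > (0:ℝ), 0 < γ z ^ 2)
    (hint : IntegrableOn (fun z => 1 / γ z ^ 2) (Set.Ioo 0 1))
    (hfeller : ∃ xbar > (0:ℝ), ∀ z, 0 < z → z < xbar → 1 ≤ 2 * a z / γ z ^ 2)
    (p1 : ℝ → ℝ)
    (hp1 : ∀ x > (0:ℝ), p1 x =
      ∫ y in (1:ℝ)..x,
        Real.exp (-2 * ∫ z in (1:ℝ)..y, (a z - b z * z) / (γ z ^ 2 * z))) :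
    Tendsto p1 (nhdsWithin 0 (Set.Ioi 0)) atBot := by
  obtain ⟨Cb, hCb⟩ := hbdd
  obtain ⟨xbar, hxbar, hfel⟩ := hfeller
  set f := fun z => (a z - b z * z) / (γ z ^ 2 * z)
  obtain ⟨c, hc0, hcx, hc1⟩ : ∃ c, 0 < c ∧ c < xbar ∧ c < 1 := by
    simpa only [lt_min_iff] using exists_between (lt_min hxbar one_pos)
  have hf : ContinuousOn f (Ioi 0) :=
    ((hac.mono Ioi_subset_Ici_self).sub ((hbc.mono Ioi_subset_Ici_self).mul continuousOn_id)).div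
      (((hγc.mono Ioi_subset_Ici_self).pow 2).mul continuousOn_id)
      fun z hz => (mul_pos (hγpos z hz) hz).ne'
  have hCb0 : 0 ≤ Cb := (abs_nonneg _).trans (hCb 0 le_rfl)
  obtain ⟨K, hK⟩ := exists_add_mul_log_le_integral (κ := 1 / 2) (g := fun z => Cb / γ z ^ 2) hf
    (by simpa only [IntegrableOn, mul_one_div] using hint.const_mul Cb)
    (fun z hz => div_nonneg hCb0 (hγpos z hz.1).le) hc0 hc1 fun z ⟨hz0, hzc⟩ => by
      simpa only [one_div_div, div_div] using one_div_two_mul_sub_div_le hz0 (hγpos z hz0)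
        ((le_abs_self _).trans (hCb z hz0.le)) (hfel z hz0 (hzc.trans_lt hcx))
  refine (tendsto_integral_one_atBot_of_div_le
    (E := fun y => Real.exp (-2 * ∫ z in (1:ℝ)..y, f z)) (D := c * Real.exp (2 * K)) hc0 hc1.le
    (by positivity) (continuousOn_const.mul (hf.continuousOn_primitive_Ioi one_pos)).rexp
    (fun _ _ => (Real.exp_pos _).le) fun y ⟨hy0, hyc⟩ => ?_).congr' ?_
  · calc c * Real.exp (2 * K) / y = Real.exp (2 * (1 / 2 * Real.log (c / y) + K)) := by
          rw [mul_add, ← mul_assoc, Real.exp_add, mul_one_div_cancel two_ne_zero, one_mul,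
            Real.exp_log (div_pos hc0 hy0), div_mul_eq_mul_div]
      _ ≤ Real.exp (-2 * ∫ z in (1:ℝ)..y, f z) := by
          rw [intervalIntegral.integral_symm, neg_mul_neg]
          gcongr
          exact hK y ⟨hy0, hyc⟩
  · filter_upwards [self_mem_nhdsWithin] with x hx
    exact (hp1 x hx).symm
end
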